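/- arXiv:2307.16560 — 2 statements merged into one kernel-verified Lean document; each statement's English description precedes it below -/
import Mathlib

section
/- Let f : ℝ → ℝ be convex and differentiable at x0 and x1 with x0 < x1, f'(x0) < 0 and f'(x1) > 0. Let y_low = min (f x0) (f x1), x⁻ = x0 + (f x0 - y_low)/(-f'(x0)) and x⁺ = x1 - (f x1 - y_low)/(f'(x1)). Then any minimizer x* of f on [x0, x1] satisfies x⁻ ≤ x* ≤ x⁺. -/
theorem delta_bisection_gap (f : ℝ → ℝ) (hf : ConvexOn ℝ Set.univ f)
    (x0 x1 : ℝ) (h01 : x0 < x1)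
    (hd0 : DifferentiableAt ℝ f x0) (hd1 : DifferentiableAt ℝ f x1)
    (hg0 : deriv f x0 < 0) (hg1 : 0 < deriv f x1)
    (xs : ℝ) (hxs : xs ∈ Set.Icc x0 x1) (hmin : ∀ x ∈ Set.Icc x0 x1, f xs ≤ f x) :
    x0 + (f x0 - min (f x0) (f x1)) / (-(deriv f x0)) ≤ xs ∧
      xs ≤ x1 - (f x1 - min (f x0) (f x1)) / (deriv f x1) := by
  obtain ⟨hxs0, hxs1⟩ := hxs
  have hfs0 : f xs ≤ f x0 := hmin x0 ⟨le_refl _, h01.le⟩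
  have hfs1 : f xs ≤ f x1 := hmin x1 ⟨h01.le, le_refl _⟩
  have hfsm : f xs ≤ min (f x0) (f x1) := le_min hfs0 hfs1
  constructor
  · have key : deriv f x0 * (xs - x0) ≤ min (f x0) (f x1) - f x0 := by
      rcases eq_or_lt_of_le hxs0 with h | h
      · subst h
        have hm : min (f x0) (f x1) = f x0 := min_eq_left hfs1
        simp [hm]
      · have := hf.deriv_le_slope (Set.mem_univ x0) (Set.mem_univ xs) h hd0
        rw [slope_def_field] at this
        have h2 : deriv f x0 * (xs - x0) ≤ f xs - f x0 := by
          have := mul_le_mul_of_nonneg_right this (le_of_lt (sub_pos.mpr h))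
          rwa [div_mul_cancel₀ _ (sub_ne_zero.mpr h.ne')] at this
        linarith
    have hpos : (0:ℝ) < -(deriv f x0) := by linarith
    rw [← le_sub_iff_add_le', div_le_iff₀ hpos]
    nlinarith
  · have key : f x1 - min (f x0) (f x1) ≤ deriv f x1 * (x1 - xs) := by
      rcases eq_or_lt_of_le hxs1 with h | h
      · have h1 : f xs = f x1 := by rw [h]
        have : min (f x0) (f x1) = f x1 := le_antisymm (min_le_right _ _) (h1 ▸ hfsm)
        rw [this, h]; ring_nf; simp
      · have := hf.slope_le_deriv (Set.mem_univ xs) (Set.mem_univ x1) h hd1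
        rw [slope_def_field] at this
        have h2 : f x1 - f xs ≤ deriv f x1 * (x1 - xs) := by
          have := mul_le_mul_of_nonneg_right this (le_of_lt (sub_pos.mpr h))
          rwa [div_mul_cancel₀ _ (sub_ne_zero.mpr h.ne')] at this
        linarith
    rw [le_sub_iff_add_le, ← le_sub_iff_add_le', div_le_iff₀ hg1]
    nlinarith
end

section
/- Optimality region theorem: let f : [a,b] → ℝ be convex and P a finite set of points on the graph of f containing points at x = a and x = b. Then for any minimizer x* of f over [a, b], the point (x*, f(x*)) lies in Δ(P): that is, a ≤ x* ≤ b, f(x*) ≤ min_{(x,y)∈P} y, and for all pairs (xi,yi),(xj,yj) ∈ P with x* not strictly between xi and xj, the secant-line value at x* is at most f(x*). -/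
/-- The secant line through two points, evaluated at `x`. -/
noncomputable def secantLine (p q : ℝ × ℝ) (x : ℝ) : ℝ :=
  p.2 + (q.2 - p.2) / (q.1 - p.1) * (x - p.1)

/-- The optimality region `Δ(P)` of a finite set of points `P`. -/
def Delta (P : Finset (ℝ × ℝ)) : Set (ℝ × ℝ) :=
  {z | (∃ p ∈ P, p.1 ≤ z.1) ∧ (∃ p ∈ P, z.1 ≤ p.1) ∧ (∀ p ∈ P, z.2 ≤ p.2) ∧
    ∀ p ∈ P, ∀ q ∈ P, p.1 ≠ q.1 →
      z.1 ∉ Set.Ioo (min p.1 q.1) (max p.1 q.1) → secantLine p q z.1 ≤ z.2}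

lemma secant_outside {f : ℝ → ℝ} {a b : ℝ} (hf : ConvexOn ℝ (Set.Icc a b) f)
    {u v x : ℝ} (hu : u ∈ Set.Icc a b) (hv : v ∈ Set.Icc a b) (hx : x ∈ Set.Icc a b)
    (huv : u < v) (hout : x ≤ u ∨ v ≤ x) :
    f u + (f v - f u) / (v - u) * (x - u) ≤ f x := by
  have hvu : (0:ℝ) < v - u := by linarith
  rcases hout with h | h
  · rcases eq_or_lt_of_le h with rfl | h
    · simp
    · have hs := hf.slope_mono_adjacent hx hv h huv
      have hux : (0:ℝ) < u - x := by linarith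
      have key : (f u - f x) * (v - u) ≤ (f v - f u) * (u - x) := by
        rw [div_le_div_iff₀ hux hvu] at hs
        linarith
      rw [div_mul_eq_mul_div, ← le_sub_iff_add_le', div_le_iff₀ hvu]
      nlinarith
  · rcases eq_or_lt_of_le h with rfl | h
    · have : (f v - f u) / (v - u) * (v - u) = f v - f u := by field_simp
      linarith
    · have hs := hf.slope_mono_adjacent hu hx huv h
      have hvx : (0:ℝ) < x - v := by linarith
      have key : (f v - f u) * (x - v) ≤ (f x - f v) * (v - u) := by
        rw [div_le_div_iff₀ hvu hvx] at hs
        linarith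
      rw [div_mul_eq_mul_div, ← le_sub_iff_add_le', div_le_iff₀ hvu]
      nlinarith

theorem optimality_region (f : ℝ → ℝ) (a b : ℝ) (hab : a < b)
    (hf : ConvexOn ℝ (Set.Icc a b) f)
    (P : Finset (ℝ × ℝ)) (hgraph : ∀ p ∈ P, p.1 ∈ Set.Icc a b ∧ p.2 = f p.1)
    (ha : (a, f a) ∈ P) (hb : (b, f b) ∈ P)
    (xs : ℝ) (hxs : xs ∈ Set.Icc a b) (hmin : ∀ x ∈ Set.Icc a b, f xs ≤ f x) :
    (xs, f xs) ∈ Delta P := by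
  refine ⟨⟨(a, f a), ha, hxs.1⟩, ⟨(b, f b), hb, hxs.2⟩, ?_, ?_⟩
  · intro p hp
    obtain ⟨hp1, hp2⟩ := hgraph p hp
    rw [hp2]
    exact hmin p.1 hp1
  · intro p hp q hq hne hout
    obtain ⟨hp1, hp2⟩ := hgraph p hp
    obtain ⟨hq1, hq2⟩ := hgraph q hq
    have hsym : p.1 < q.1 ∨ q.1 < p.1 := lt_or_gt_of_ne hne
    simp only [Set.mem_Ioo, not_and, not_lt] at hout
    rcases hsym with h | h
    · rw [min_eq_left h.le, max_eq_right h.le] at hout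
      have hout' : xs ≤ p.1 ∨ q.1 ≤ xs := by
        by_cases hc : p.1 < xs
        · exact Or.inr (hout hc)
        · exact Or.inl (le_of_not_gt hc)
      have := secant_outside hf hp1 hq1 hxs h hout'
      simp only [secantLine, hp2, hq2]
      exact this
    · rw [min_eq_right h.le, max_eq_left h.le] at hout
      have hout' : xs ≤ q.1 ∨ p.1 ≤ xs := by
        by_cases hc : q.1 < xs
        · exact Or.inr (hout hc)
        · exact Or.inl (le_of_not_gt hc)
      have key := secant_outside hf hq1 hp1 hxs h hout'
      simp only [secantLine, hp2, hq2]
      -- secant through p,q at xs equals secant through q,p at xs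
      have hne' : p.1 - q.1 ≠ 0 := sub_ne_zero.mpr hne
      have hs : (f p.1 - f q.1) / (p.1 - q.1) = (f q.1 - f p.1) / (q.1 - p.1) := by
        rw [← neg_div_neg_eq]; ring_nf
      have hc : (f q.1 - f p.1) / (q.1 - p.1) * (q.1 - p.1) = f q.1 - f p.1 :=
        div_mul_cancel₀ _ (sub_ne_zero.mpr (Ne.symm hne))
      have : f p.1 + (f q.1 - f p.1) / (q.1 - p.1) * (xs - p.1)
           = f q.1 + (f p.1 - f q.1) / (p.1 - q.1) * (xs - q.1) := by
        rw [hs]; linear_combination hc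
      rw [this]
      exact key
end
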